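/- arXiv:0902.2237 — 5 statements merged into one kernel-verified Lean document; each statement's English description precedes it below -/
import Mathlib

section
/- Over a ring R, every strongly Gorenstein projective R-module is projective if and only if Ext^1_R(M,M) = 0 for every strongly Gorenstein projective R-module M. -/
open CategoryTheory

noncomputable instance (R : Type) [CommRing R] : HasExt.{1} (ModuleCat.{0} R) :=
  have : HasDerivedCategory.{1} (ModuleCat.{0} R) := HasDerivedCategory.standard _
  hasExt_of_hasDerivedCategory _

/-- `Ext^n_R(M, N) = 0`. -/
def ExtVanish (R : Type) [CommRing R] (M N : Type) [AddCommGroup M] [Module R M]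
    [AddCommGroup N] [Module R N] (n : ℕ) : Prop :=
  Subsingleton (Abelian.Ext (ModuleCat.of R M) (ModuleCat.of R N) n)

/-- Strongly Gorenstein projective (short exact sequence characterization):
there is an exact sequence `0 → M → P → M → 0` with `P` projective, and
`Ext^1_R(M, Q) = 0` for every projective `Q`. -/
def IsSGP (R : Type) [CommRing R] (M : Type) [AddCommGroup M] [Module R M] : Prop :=
  (∃ (P : ModuleCat.{0} R) (i : M →ₗ[R] P) (p : P →ₗ[R] M),
      Module.Projective R P ∧ Function.Injective i ∧ Function.Surjective p ∧
      LinearMap.range i = LinearMap.ker p) ∧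
  ∀ Q : ModuleCat.{0} R, Module.Projective R Q → ExtVanish R M Q 1

/-- Strongly Gorenstein projective (complete resolution definition): there is an exact
complex `⋯ → P →^f P →^f P → ⋯` of projective modules which stays exact after applying
`Hom(-, Q)` for every projective `Q`, with `M ≅ Im f`. -/
def IsSGPComplete (R : Type) [CommRing R] (M : Type) [AddCommGroup M] [Module R M] : Prop :=
  ∃ (P : ModuleCat.{0} R) (f : P →ₗ[R] P),
    Module.Projective R P ∧ LinearMap.range f = LinearMap.ker f ∧
    (∀ Q : ModuleCat.{0} R, Module.Projective R Q →
      LinearMap.range (LinearMap.lcomp R Q f) = LinearMap.ker (LinearMap.lcomp R Q f)) ∧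
    Nonempty (M ≃ₗ[R] LinearMap.range f)

/-- Gorenstein projective: there is a complete projective resolution, i.e. an exact complex
`⋯ → P_i →^{d_i} P_{i+1} → ⋯` of projective modules which stays exact after applying
`Hom(-, Q)` for every projective `Q`, with `M` isomorphic to one of the images. -/
def IsGP (R : Type) [CommRing R] (M : Type) [AddCommGroup M] [Module R M] : Prop :=
  ∃ (P : ℤ → ModuleCat.{0} R) (d : ∀ i, P i →ₗ[R] P (i + 1)),
    (∀ i, Module.Projective R (P i)) ∧
    (∀ i, LinearMap.range (d i) = LinearMap.ker (d (i + 1))) ∧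
    (∀ (Q : ModuleCat.{0} R), Module.Projective R Q → ∀ i,
      LinearMap.range (LinearMap.lcomp R Q (d (i + 1))) =
        LinearMap.ker (LinearMap.lcomp R Q (d i))) ∧
    ∃ i, Nonempty (M ≃ₗ[R] LinearMap.range (d i))

/-- `ResLen R C n M` : `M` admits a resolution `0 → G_n → ⋯ → G_0 → M → 0`
where each `G_j` satisfies the predicate `C`. -/
def ResLen (R : Type) [CommRing R] (C : ModuleCat.{0} R → Prop) :
    ℕ → ModuleCat.{0} R → Prop
  | 0, M => C M
  | n + 1, M => ∃ (G : ModuleCat.{0} R) (g : G →ₗ[R] M), C G ∧ Function.Surjective g ∧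
      ResLen R C n (ModuleCat.of R (LinearMap.ker g))

/-- The projective dimension of `M`, as an element of `ℕ∞`. -/
noncomputable def pdim (R : Type) [CommRing R] (M : Type) [AddCommGroup M] [Module R M] : ℕ∞ :=
  sInf {c : ℕ∞ | ∃ n : ℕ, c = n ∧
    ResLen R (fun P => Module.Projective R P) n (ModuleCat.of R M)}

/-- The Gorenstein projective dimension of `M`, as an element of `ℕ∞`. -/
noncomputable def Gpdim (R : Type) [CommRing R] (M : Type) [AddCommGroup M] [Module R M] : ℕ∞ :=
  sInf {c : ℕ∞ | ∃ n : ℕ, c = n ∧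
    ResLen R (fun G => IsGP R G) n (ModuleCat.of R M)}

/-- `M` admits a finite `n`-presentation: an exact sequence
`F_n → ⋯ → F_0 → M → 0` with each `F_i` finitely generated free. -/
def NPres (R : Type) [CommRing R] : ℕ → ModuleCat.{0} R → Prop
  | 0, M => ∃ (F : ModuleCat.{0} R) (g : F →ₗ[R] M),
      Module.Free R F ∧ Module.Finite R F ∧ Function.Surjective g
  | n + 1, M => ∃ (F : ModuleCat.{0} R) (g : F →ₗ[R] M),
      Module.Free R F ∧ Module.Finite R F ∧ Function.Surjective g ∧
      NPres R n (ModuleCat.of R (LinearMap.ker g))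

/-! The forward direction is immediate: `M` is one of the projectives `Q` with
`Ext^1(M, Q) = 0`. Conversely, if `Ext^1(M, M) = 0` then the class of `0 → M → P → M → 0`
vanishes, so the sequence splits and `M` is a direct summand of the projective `P`. -/

universe w v u

namespace CategoryTheory.ShortComplex.ShortExact

variable {C : Type u} [Category.{v} C] [Abelian C] [HasExt.{w} C]

/-- The identity of `X₃` lifts along `g` in the long exact `Ext(X₃, -)` sequence, since its
image `Ext^1(X₃, X₁)` is trivial; degree-`0` Ext classes are morphisms. -/
lemma exists_comp_g_eq_id_of_subsingleton_ext {S : ShortComplex C} (hS : S.ShortExact)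
    [Subsingleton (Abelian.Ext S.X₃ S.X₁ 1)] : ∃ s : S.X₃ ⟶ S.X₂, s ≫ S.g = 𝟙 S.X₃ := by
  obtain ⟨x, hx⟩ := Abelian.Ext.covariant_sequence_exact₃ S.X₃ hS (Abelian.Ext.mk₀ (𝟙 S.X₃))
    rfl (Subsingleton.elim _ _)
  obtain ⟨s, rfl⟩ := (Abelian.Ext.mk₀_bijective S.X₃ S.X₂).2 x
  refine ⟨s, (Abelian.Ext.mk₀_bijective S.X₃ S.X₃).1 ?_⟩
  rwa [← Abelian.Ext.mk₀_comp_mk₀]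

end CategoryTheory.ShortComplex.ShortExact

lemma Module.Projective.of_subsingleton_ext_of_shortExact {R : Type u} [Ring R]
    [HasExt.{w} (ModuleCat.{v} R)] {M P N : Type v}
    [AddCommGroup M] [Module R M] [AddCommGroup P] [Module R P] [AddCommGroup N] [Module R N]
    [Module.Projective R P] (i : M →ₗ[R] P) (p : P →ₗ[R] N) (hi : Function.Injective i)
    (hp : Function.Surjective p) (hip : Function.Exact i p)
    [Subsingleton (Abelian.Ext (ModuleCat.of R N) (ModuleCat.of R M) 1)] :
    Module.Projective R N := by
  let S := ModuleCat.shortComplexOfCompEqZero i p (LinearMap.ext hip.apply_apply_eq_zero)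
  obtain ⟨s, hs⟩ :=
    (ModuleCat.shortComplex_shortExact S hip hi hp).exists_comp_g_eq_id_of_subsingleton_ext
  exact Module.Projective.of_split s.hom p congr(ModuleCat.Hom.hom $hs)

/-- every strongly Gorenstein projective `R`-module is projective iff
`Ext^1_R(M, M) = 0` for every strongly Gorenstein projective `R`-module `M`. -/
theorem stmt2 (R : Type) [CommRing R] :
    (∀ (M : Type) [AddCommGroup M] [Module R M], IsSGP R M → Module.Projective R M) ↔
    (∀ (M : Type) [AddCommGroup M] [Module R M], IsSGP R M → ExtVanish R M M 1) := by
  refine ⟨fun hproj M _ _ hM => hM.2 (ModuleCat.of R M) (hproj M hM), fun hext M _ _ hM => ?_⟩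
  have : Subsingleton (Abelian.Ext (ModuleCat.of R M) (ModuleCat.of R M) 1) := hext M hM
  obtain ⟨⟨P, i, p, hP, hi, hp, hip⟩, -⟩ := hM
  exact Module.Projective.of_subsingleton_ext_of_shortExact i p hi hp
    (LinearMap.exact_iff.mpr hip.symm)
end

section
/- If M is a strongly Gorenstein projective R-module and Ext^1_R(M,M) = 0, then M is projective. -/
open CategoryTheory

universe w

namespace CategoryTheory.ShortComplex.ShortExact

variable {C : Type*} [Category C] [Abelian C] [HasExt.{w} C] {S : ShortComplex C}

/-- The identity of `S.X₃` dies under the connecting map to `Ext¹(S.X₃, S.X₁) = 0`, so by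
exactness of `Hom(S.X₃, S.X₂) → Hom(S.X₃, S.X₃) → Ext¹(S.X₃, S.X₁)` it lifts to a section. -/
lemma isSplitEpi_g_of_subsingleton_ext (hS : S.ShortExact)
    [Subsingleton (Abelian.Ext S.X₃ S.X₁ 1)] : IsSplitEpi S.g := by
  obtain ⟨x, hx⟩ := Abelian.Ext.covariant_sequence_exact₃ S.X₃ hS (Abelian.Ext.mk₀ (𝟙 S.X₃))
    (zero_add 1) (Subsingleton.elim _ _)
  refine ⟨⟨Abelian.Ext.homEquiv₀ x, Abelian.Ext.mk₀_bijective _ _ |>.injective ?_⟩⟩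
  rw [← Abelian.Ext.mk₀_comp_mk₀, Abelian.Ext.mk₀_homEquiv₀_apply, hx]

end CategoryTheory.ShortComplex.ShortExact

theorem Module.Projective.of_shortExact_of_extVanish {R : Type} [CommRing R]
    {N P M : Type} [AddCommGroup N] [Module R N] [AddCommGroup P] [Module R P]
    [AddCommGroup M] [Module R M] [Module.Projective R P] (i : N →ₗ[R] P) (p : P →ₗ[R] M)
    (hi : Function.Injective i) (hp : Function.Surjective p)
    (hexact : LinearMap.range i = LinearMap.ker p) (hext : ExtVanish R M N 1) :
    Module.Projective R M := by
  let S := ModuleCat.shortComplexOfCompEqZero i p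
    (by ext x; simp [← LinearMap.mem_ker, ← hexact])
  have hS : S.ShortExact := ModuleCat.shortComplex_shortExact S
    (LinearMap.exact_iff.mpr hexact.symm) hi hp
  have : Subsingleton (Abelian.Ext S.X₃ S.X₁ 1) := hext
  have := hS.isSplitEpi_g_of_subsingleton_ext
  exact Module.Projective.of_split (section_ S.g).hom p
    (congrArg ModuleCat.Hom.hom (IsSplitEpi.id S.g))

/-- a strongly Gorenstein projective module `M` with `Ext^1_R(M,M) = 0`
is projective. -/
theorem stmt3 (R : Type) [CommRing R] (M : Type) [AddCommGroup M] [Module R M]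
    (h1 : IsSGP R M) (h2 : ExtVanish R M M 1) : Module.Projective R M := by
  obtain ⟨⟨P, i, p, hP, hi, hp, hexact⟩, -⟩ := h1
  exact Module.Projective.of_shortExact_of_extVanish i p hi hp hexact h2
end

section
/- Every finitely generated strongly Gorenstein projective R-module is projective if and only if Ext^1_R(M,M) = 0 for every finitely generated strongly Gorenstein projective R-module M. -/
open CategoryTheory

/-! A short exact sequence `0 → M' → P → N → 0` with `P` projective and `Ext¹(N, M') = 0` splits,
so `N` is a direct summand of `P`. For a strongly Gorenstein projective `M` take `M' = N = M`. -/

namespace CategoryTheory.ShortComplex.ShortExact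

variable {C : Type*} [Category C] [Abelian C] [HasExt C] {S : ShortComplex C}

lemma exists_section_of_extClass_eq_zero (hS : S.ShortExact) (h : hS.extClass = 0) :
    ∃ s : S.X₃ ⟶ S.X₂, s ≫ S.g = 𝟙 S.X₃ := by
  obtain ⟨x, hx⟩ := Abelian.Ext.covariant_sequence_exact₃ S.X₃ hS (Abelian.Ext.mk₀ (𝟙 S.X₃))
    rfl (by rw [Abelian.Ext.mk₀_id_comp, h])
  obtain ⟨s, rfl⟩ := (Abelian.Ext.mk₀_bijective S.X₃ S.X₂).2 x
  rw [Abelian.Ext.mk₀_comp_mk₀] at hx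
  exact ⟨s, (Abelian.Ext.mk₀_bijective _ _).1 hx⟩

end CategoryTheory.ShortComplex.ShortExact

lemma Module.Projective.of_exact_of_extVanish {R : Type} [CommRing R]
    {M' P N : Type} [AddCommGroup M'] [Module R M'] [AddCommGroup P] [Module R P]
    [AddCommGroup N] [Module R N] [Module.Projective R P]
    (i : M' →ₗ[R] P) (p : P →ₗ[R] N) (hi : Function.Injective i) (hp : Function.Surjective p)
    (hip : LinearMap.range i = LinearMap.ker p) (hext : ExtVanish R N M' 1) :
    Module.Projective R N := by
  let S : ShortComplex (ModuleCat.{0} R) :=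
    ShortComplex.mk (ModuleCat.ofHom i) (ModuleCat.ofHom p) (by
      ext x
      exact (hip ▸ LinearMap.mem_range_self i x : i x ∈ LinearMap.ker p))
  have hS : S.ShortExact :=
    { exact := S.moduleCat_exact_iff_range_eq_ker.mpr hip
      mono_f := (ModuleCat.mono_iff_injective _).mpr hi
      epi_g := (ModuleCat.epi_iff_surjective _).mpr hp }
  have : Subsingleton (Abelian.Ext S.X₃ S.X₁ 1) := hext
  obtain ⟨s, hs⟩ := hS.exists_section_of_extClass_eq_zero (Subsingleton.elim _ _)
  exact Module.Projective.of_split s.hom p (congrArg ModuleCat.Hom.hom hs)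

/-- every finitely generated strongly Gorenstein projective `R`-module is
projective iff `Ext^1_R(M,M) = 0` for every finitely generated strongly Gorenstein
projective `R`-module `M`. -/
theorem stmt7 (R : Type) [CommRing R] :
    (∀ (M : Type) [AddCommGroup M] [Module R M],
        Module.Finite R M → IsSGP R M → Module.Projective R M) ↔
    (∀ (M : Type) [AddCommGroup M] [Module R M],
        Module.Finite R M → IsSGP R M → ExtVanish R M M 1) := by
  constructor
  · intro h M _ _ hfin hsgp
    exact hsgp.2 (ModuleCat.of R M) (h M hfin hsgp)
  · intro h M _ _ hfin hsgp
    have hMM := h M hfin hsgp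
    obtain ⟨⟨P, i, p, hP, hi, hp, hip⟩, -⟩ := hsgp
    exact Module.Projective.of_exact_of_extVanish i p hi hp hip hMM
end

section
/- If R is an (n,d)-ring, then every finitely generated strongly Gorenstein projective R-module is projective. -/
open CategoryTheory

/-!
A finitely generated module `M` with an exact sequence `0 → M → P → M → 0`, `P` projective, is
infinitely presented: `P` is finitely generated, `Q × P` is finite free for a complement `Q`, and
the endomorphisms `0 × ip` and `id × ip` of `Q × P` form a two-periodic finite free resolution.
So over an `(n,d)`-ring such an `M` has finite projective dimension. But `M ≅ Ω M` and finite
projective dimension force `M` to be projective: given `0 → K → G → M → 0` with `G` projective,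
Schanuel's lemma gives `M × G ≅ K × P`, so `M × G`, which again satisfies `M × G ≅ Ω (M × G)`, has
a shorter projective resolution, and induction applies.
-/

namespace Submodule

variable {R M N : Type*} [Semiring R] [AddCommMonoid M] [Module R M] [AddCommMonoid N] [Module R N]

def prodEquiv (p : Submodule R M) (q : Submodule R N) : p.prod q ≃ₗ[R] p × q where
  toFun x := (⟨x.1.1, x.2.1⟩, ⟨x.1.2, x.2.2⟩)
  invFun y := ⟨(y.1, y.2), y.1.2, y.2.2⟩
  map_add' _ _ := rfl
  map_smul' _ _ := rfl
  left_inv _ := rfl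
  right_inv _ := rfl

end Submodule

namespace LinearMap

variable {R : Type*} [Ring R] {M P Q : Type*} [AddCommGroup M] [Module R M]
  [AddCommGroup P] [Module R P] [AddCommGroup Q] [Module R Q]

theorem ker_comp_fst (f : P →ₗ[R] M) : ker (f ∘ₗ fst R P Q) = (ker f).prod ⊤ := by
  rw [ker_comp, Submodule.comap_fst]

theorem ker_comp_snd (g : Q →ₗ[R] M) :
    ker (g ∘ₗ snd R P Q) = (⊤ : Submodule R P).prod (ker g) := by
  rw [ker_comp, Submodule.comap_snd]

theorem surjective_codRestrict_of_range_eq (f : M →ₗ[R] P) {p : Submodule R P}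
    (h : range f = p) : Function.Surjective (f.codRestrict p fun x => h ▸ mem_range_self f x) :=
  fun ⟨_, hy⟩ => let ⟨x, hx⟩ := h ▸ hy; ⟨x, Subtype.ext hx⟩

theorem nonempty_equiv_ker_prod_of_projective [Module.Projective R P] (π : M →ₗ[R] P)
    (hπ : Function.Surjective π) : Nonempty (M ≃ₗ[R] (ker π × P)) :=
  let ⟨s, hs⟩ := Module.projective_lifting_property π .id hπ
  ⟨((exact_subtype_ker_map π).splitSurjectiveEquiv (ker π).injective_subtype ⟨s, hs⟩).1⟩

theorem schanuel [Module.Projective R P] [Module.Projective R Q] {f : P →ₗ[R] M}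
    {g : Q →ₗ[R] M} (hf : Function.Surjective f) (hg : Function.Surjective g) :
    Nonempty ((ker f × Q) ≃ₗ[R] (P × ker g)) := by
  obtain ⟨α, hα⟩ := Module.projective_lifting_property g f hg
  obtain ⟨β, hβ⟩ := Module.projective_lifting_property f g hf
  -- `E₁ (x, y) = (x, y + α x)` and `E₂ (x, y) = (x + β y, y)` satisfy `g (E₁ z).2 = f (E₂ z).1`.
  let E₁ : (P × Q) ≃ₗ[R] P × Q := (LinearEquiv.refl R P).skewProd (.refl R Q) α
  let E₂ : (P × Q) ≃ₗ[R] P × Q :=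
    LinearEquiv.prodComm R P Q ≪≫ₗ (LinearEquiv.refl R Q).skewProd (.refl R P) β ≪≫ₗ
      LinearEquiv.prodComm R Q P
  let T : (P × Q) ≃ₗ[R] P × Q := E₂.symm ≪≫ₗ E₁
  have hT : (g ∘ₗ snd R P Q) ∘ₗ T.toLinearMap = f ∘ₗ fst R P Q := by
    refine LinearMap.ext fun z => ?_
    obtain ⟨w, rfl⟩ := E₂.surjective z
    have h₁ : g (α w.1) = f w.1 := LinearMap.congr_fun hα w.1
    have h₂ : f (β w.2) = g w.2 := LinearMap.congr_fun hβ w.2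
    simp [T, E₁, E₂, h₁, h₂, add_comm]
  have hker : ker (f ∘ₗ fst R P Q) = (ker (g ∘ₗ snd R P Q)).comap T.toLinearMap := by
    rw [← ker_comp, hT]
  exact ⟨LinearEquiv.prodCongr (.refl R _) Submodule.topEquiv.symm ≪≫ₗ
    (Submodule.prodEquiv _ _).symm ≪≫ₗ LinearEquiv.ofEq _ _ ((ker_comp_fst f).symm.trans hker) ≪≫ₗ
    T.ofSubmodule' _ ≪≫ₗ LinearEquiv.ofEq _ _ (ker_comp_snd g) ≪≫ₗ Submodule.prodEquiv _ _ ≪≫ₗ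
    LinearEquiv.prodCongr Submodule.topEquiv (.refl R _)⟩

end LinearMap

open LinearMap

abbrev HasProjResolution (R : Type) [CommRing R] (M : Type) [AddCommGroup M] [Module R M]
    (k : ℕ) : Prop :=
  ResLen R (fun P => Module.Projective R P) k (ModuleCat.of R M)

def IsSelfSyzygy (R : Type) [CommRing R] (M : Type) [AddCommGroup M] [Module R M] : Prop :=
  ∃ (P : ModuleCat.{0} R) (i : M →ₗ[R] P) (p : P →ₗ[R] M),
    Module.Projective R P ∧ Function.Injective i ∧ Function.Surjective p ∧
    LinearMap.range i = LinearMap.ker p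

section

variable {R : Type} [CommRing R]

section ProjResolution

variable {A B : Type} [AddCommGroup A] [Module R A] [AddCommGroup B] [Module R B]

theorem HasProjResolution.of_linearEquiv {k : ℕ} (e : A ≃ₗ[R] B)
    (h : HasProjResolution R A k) : HasProjResolution R B k := by
  induction k generalizing A B with
  | zero =>
    have : Module.Projective R A := h
    exact Module.Projective.of_equiv e
  | succ k _ =>
    obtain ⟨G, g, hG, hg, hK⟩ := h
    refine ⟨G, e.toLinearMap ∘ₗ g, hG, e.surjective.comp hg, ?_⟩
    rwa [ker_comp, LinearEquiv.ker, Submodule.comap_bot]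

theorem HasProjResolution.of_projective (k : ℕ) (hB : Module.Projective R B) :
    HasProjResolution R B k := by
  induction k generalizing B with
  | zero => exact hB
  | succ k ih =>
    refine ⟨ModuleCat.of R B, LinearMap.id, hB, Function.surjective_id, ih ?_⟩
    have : Subsingleton (ker (LinearMap.id : B →ₗ[R] B)) := by
      rw [ker_id]; infer_instance
    infer_instance

theorem HasProjResolution.prod {k : ℕ} (hA : HasProjResolution R A k)
    (hB : HasProjResolution R B k) : HasProjResolution R (A × B) k := by
  induction k generalizing A B with
  | zero =>
    have : Module.Projective R A := hA
    have : Module.Projective R B := hB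
    exact (inferInstance : Module.Projective R (A × B))
  | succ k ih =>
    obtain ⟨G, g, hG, hg, hK⟩ := hA
    obtain ⟨G', g', hG', hg', hK'⟩ := hB
    refine ⟨ModuleCat.of R (G × G'), g.prodMap g', inferInstance, hg.prodMap hg', ?_⟩
    exact (ih hK hK').of_linearEquiv
      ((Submodule.prodEquiv _ _).symm ≪≫ₗ LinearEquiv.ofEq _ _ (ker_prodMap g g').symm)

theorem exists_hasProjResolution_of_pdim_ne_top (h : pdim R A ≠ ⊤) :
    ∃ k, HasProjResolution R A k := by
  contrapose! h
  exact sInf_eq_top.mpr fun _ ⟨k, _, hk⟩ => absurd hk (h k)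

end ProjResolution

namespace IsSelfSyzygy

variable {M : Type} [AddCommGroup M] [Module R M]

theorem prod_projective {G : Type} [AddCommGroup G] [Module R G] [Module.Projective R G]
    (hM : IsSelfSyzygy R M) : IsSelfSyzygy R (M × G) := by
  obtain ⟨P, i, p, hP, hi, hp, hip⟩ := hM
  refine ⟨ModuleCat.of R (P × (G × G)), i.prodMap (inl R G G), p.prodMap (snd R G G),
    inferInstance, hi.prodMap (inl_injective (R := R)), hp.prodMap (snd_surjective (R := R)), ?_⟩
  rw [range_prodMap, ker_prodMap, hip, range_inl]

theorem projective_of_hasProjResolution {k : ℕ} (hM : IsSelfSyzygy R M)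
    (hres : HasProjResolution R M k) : Module.Projective R M := by
  induction k generalizing M with
  | zero => exact hres
  | succ k ih =>
    obtain ⟨G, g, hG, hg, hK⟩ := hres
    have hMG : IsSelfSyzygy R (M × G) := hM.prod_projective
    obtain ⟨P, i, p, hP, hi, hp, hip⟩ := hM
    have eM : M ≃ₗ[R] ker p := LinearEquiv.ofInjective i hi ≪≫ₗ LinearEquiv.ofEq _ _ hip
    obtain ⟨e⟩ := schanuel hp hg
    have hresMG : HasProjResolution R (M × G) k :=
      ((HasProjResolution.of_projective k hP).prod hK).of_linearEquiv
        (e.symm ≪≫ₗ eM.symm.prodCongr (.refl R G))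
    have : Module.Projective R (M × G) := ih hMG hresMG
    exact .of_split (inl R M G) (fst R M G) rfl

end IsSelfSyzygy

theorem nPres_ker_of_range_eq_ker {F : Type} [AddCommGroup F] [Module R F] [Module.Free R F]
    [Module.Finite R F] (k : ℕ) {f h : F →ₗ[R] F} (hf : range f = ker h) (hh : range h = ker f) :
    NPres R k (ModuleCat.of R (ker f)) := by
  induction k generalizing f h with
  | zero => exact ⟨.of R F, _, ‹_›, ‹_›, h.surjective_codRestrict_of_range_eq hh⟩
  | succ k ih =>
    refine ⟨.of R F, _, ‹_›, ‹_›, h.surjective_codRestrict_of_range_eq hh, ?_⟩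
    rw [ker_codRestrict]
    exact ih hh hf

theorem IsSelfSyzygy.nPres {M : Type} [AddCommGroup M] [Module R M] [Module.Finite R M]
    (hM : IsSelfSyzygy R M) (n : ℕ) : NPres R n (ModuleCat.of R M) := by
  obtain ⟨P, i, p, hP, hi, hp, hip⟩ := hM
  have : Module.Finite R P := Module.Finite.of_exact (exact_iff.mpr hip.symm) hp
  obtain ⟨m, π, hπ⟩ := Module.Finite.exists_fin' R P
  obtain ⟨e⟩ := nonempty_equiv_ker_prod_of_projective π hπ
  have : Module.Free R (ker π × P) := .of_equiv e
  have : Module.Finite R (ker π × P) := .equiv e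
  set u := i ∘ₗ p
  have hker : ker u = ker p := ker_comp_of_ker_eq_bot p (ker_eq_bot.mpr hi)
  have hu : range u = ker u := by
    rw [range_comp_of_range_eq_top i (range_eq_top.mpr hp), hker, hip]
  have h₀ : range ((0 : ker π →ₗ[R] ker π).prodMap u) = ker (LinearMap.id.prodMap u) := by
    rw [range_prodMap, ker_prodMap, range_zero, ker_id, hu]
  have h₁ : range (LinearMap.id.prodMap u) = ker ((0 : ker π →ₗ[R] ker π).prodMap u) := by
    rw [range_prodMap, ker_prodMap, range_id, ker_zero, hu]
  have hg : Function.Surjective (p ∘ₗ snd R (ker π) P) := hp.comp (snd_surjective (R := R))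
  cases n with
  | zero => exact ⟨ModuleCat.of R (ker π × P), p ∘ₗ snd R (ker π) P, ‹_›, ‹_›, hg⟩
  | succ n =>
    refine ⟨ModuleCat.of R (ker π × P), p ∘ₗ snd R (ker π) P, ‹_›, ‹_›, hg, ?_⟩
    have hgker : ker (p ∘ₗ snd R (ker π) P) = ker ((0 : ker π →ₗ[R] ker π).prodMap u) := by
      rw [ker_comp_snd, ker_prodMap, ker_zero, hker]
    rw [hgker]
    exact nPres_ker_of_range_eq_ker n h₀ h₁

end

/-- if `R` is an `(n,d)`-ring (every module admitting a finite
`n`-presentation has projective dimension at most `d`), then every finitely generated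
strongly Gorenstein projective `R`-module is projective. -/
theorem stmt14 (R : Type) [CommRing R] (n d : ℕ)
    (hnd : ∀ (M : Type) [AddCommGroup M] [Module R M],
        NPres R n (ModuleCat.of R M) → pdim R M ≤ (d : ℕ∞)) :
    ∀ (M : Type) [AddCommGroup M] [Module R M],
        Module.Finite R M → IsSGP R M → Module.Projective R M := by
  intro M _ _ _ hM
  have hSyz : IsSelfSyzygy R M := hM.1
  have hpdim : pdim R M ≠ ⊤ := ne_top_of_le_ne_top (ENat.natCast_ne_top d) (hnd M (hSyz.nPres n))
  obtain ⟨k, hk⟩ := exists_hasProjResolution_of_pdim_ne_top hpdim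
  exact hSyz.projective_of_hasProjResolution hk
end

section
/- If a module M fits into a short exact sequence 0 → M → P → M → 0 with P projective and M has finite projective dimension, then M is projective. -/
open CategoryTheory

/-! Induct on the length of a projective resolution of `M`. Let `G → M` be a surjection from a
projective whose kernel `K` has a shorter resolution. Schanuel's lemma gives `M × G ≃ K × P`, so
`M × G` has a shorter resolution as well, and it sits in the sequence
`0 → M × G → P × G × G → M × G → 0`, the sum of the given one with `0 → G → G × G → G → 0`.
By induction `M × G` is projective, hence so is its summand `M`. -/

section
variable {R : Type} [CommRing R]

theorem Function.Exact.prodMap {A B C A' B' C' : Type} [AddCommGroup A] [Module R A]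
    [AddCommGroup B] [Module R B] [AddCommGroup C] [Module R C] [AddCommGroup A'] [Module R A']
    [AddCommGroup B'] [Module R B'] [AddCommGroup C'] [Module R C']
    {f : A →ₗ[R] B} {g : B →ₗ[R] C} {f' : A' →ₗ[R] B'} {g' : B' →ₗ[R] C'}
    (h : Function.Exact f g) (h' : Function.Exact f' g') :
    Function.Exact (f.prodMap f') (g.prodMap g') := by
  rintro ⟨y, y'⟩
  simp [Prod.ext_iff, h y, h' y']

theorem Function.Exact.nonempty_linearEquiv_prod {A X G : Type} [AddCommGroup A] [Module R A]
    [AddCommGroup X] [Module R X] [AddCommGroup G] [Module R G] [Module.Projective R G]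
    {ι : A →ₗ[R] X} {π : X →ₗ[R] G} (h : Function.Exact ι π) (hι : Function.Injective ι)
    (hπ : Function.Surjective π) : Nonempty (X ≃ₗ[R] (A × G)) := by
  obtain ⟨s, hs⟩ := Module.projective_lifting_property π LinearMap.id hπ
  exact ⟨(h.splitSurjectiveEquiv hι ⟨s, hs⟩).1⟩

/-- `LinearMap.eqLocus (p ∘ₗ fst) (g ∘ₗ snd)` is the pullback of `p` and `g`. -/
theorem nonempty_eqLocus_linearEquiv_prod {A P G C : Type} [AddCommGroup A] [Module R A]
    [AddCommGroup P] [Module R P] [AddCommGroup G] [Module R G] [Module.Projective R G]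
    [AddCommGroup C] [Module R C] {i : A →ₗ[R] P} {p : P →ₗ[R] C} (g : G →ₗ[R] C)
    (hi : Function.Injective i) (hp : Function.Surjective p) (h : Function.Exact i p) :
    Nonempty (LinearMap.eqLocus (p ∘ₗ LinearMap.fst R P G) (g ∘ₗ LinearMap.snd R P G) ≃ₗ[R]
      (A × G)) := by
  set X := LinearMap.eqLocus (p ∘ₗ LinearMap.fst R P G) (g ∘ₗ LinearMap.snd R P G)
  let ι : A →ₗ[R] X := (LinearMap.inl R P G ∘ₗ i).codRestrict X fun a => by
    simp [X, LinearMap.mem_eqLocus, h.apply_apply_eq_zero]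
  refine Function.Exact.nonempty_linearEquiv_prod (ι := ι) (π := LinearMap.snd R P G ∘ₗ X.subtype)
    ?_ ?_ ?_
  · rintro ⟨⟨x, y⟩, hxy⟩
    simp only [X, LinearMap.mem_eqLocus, LinearMap.comp_apply, LinearMap.fst_apply,
      LinearMap.snd_apply] at hxy
    constructor
    · rintro (rfl : y = 0)
      obtain ⟨a, rfl⟩ := (h x).1 (by simpa using hxy)
      exact ⟨a, rfl⟩
    · rintro ⟨a, ha⟩
      exact (congrArg (fun z : X => (z : P × G).2) ha).symm
  · intro a b hab
    exact hi (congrArg (fun z : X => (z : P × G).1) hab)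
  · intro y
    obtain ⟨x, hx⟩ := hp (g y)
    exact ⟨⟨(x, y), hx⟩, rfl⟩

theorem schanuel {A B P G C : Type} [AddCommGroup A] [Module R A] [AddCommGroup B] [Module R B]
    [AddCommGroup P] [Module R P] [Module.Projective R P]
    [AddCommGroup G] [Module R G] [Module.Projective R G] [AddCommGroup C] [Module R C]
    {i : A →ₗ[R] P} {p : P →ₗ[R] C} {j : B →ₗ[R] G} {g : G →ₗ[R] C}
    (hi : Function.Injective i) (hp : Function.Surjective p) (hip : Function.Exact i p)
    (hj : Function.Injective j) (hg : Function.Surjective g) (hjg : Function.Exact j g) :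
    Nonempty ((A × G) ≃ₗ[R] (B × P)) := by
  obtain ⟨e⟩ := nonempty_eqLocus_linearEquiv_prod g hi hp hip
  obtain ⟨e'⟩ := nonempty_eqLocus_linearEquiv_prod p hj hg hjg
  have hswap : (LinearMap.eqLocus (p ∘ₗ LinearMap.fst R P G) (g ∘ₗ LinearMap.snd R P G)).map
      (LinearEquiv.prodComm R P G).toLinearMap =
      LinearMap.eqLocus (g ∘ₗ LinearMap.fst R G P) (p ∘ₗ LinearMap.snd R G P) := by
    ext ⟨y, x⟩
    simp [Submodule.map_equiv_eq_comap_symm, LinearMap.mem_eqLocus, eq_comm]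
  exact ⟨e.symm.trans ((LinearEquiv.ofSubmodules _ _ _ hswap).trans e')⟩

theorem ResLen.of_linearEquiv {C : ModuleCat.{0} R → Prop}
    (hC : ∀ {N N' : ModuleCat.{0} R}, (N ≃ₗ[R] N') → C N → C N') :
    ∀ {n : ℕ} {N N' : ModuleCat.{0} R}, (N ≃ₗ[R] N') → ResLen R C n N → ResLen R C n N'
  | 0, _, _, e, h => hC e h
  | n + 1, _, _, e, ⟨G, g, hG, hg, hres⟩ => by
    refine ⟨G, e.toLinearMap ∘ₗ g, hG, e.surjective.comp hg, ?_⟩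
    rwa [LinearMap.ker_comp_of_ker_eq_bot _ e.ker]

theorem ResLen.projective_of_linearEquiv {n : ℕ} {N N' : ModuleCat.{0} R} (e : N ≃ₗ[R] N')
    (h : ResLen R (fun P => Module.Projective R P) n N) :
    ResLen R (fun P => Module.Projective R P) n N' :=
  ResLen.of_linearEquiv (fun e (_ : Module.Projective R _) => .of_equiv e) e h

theorem ResLen.projective_prod {n : ℕ} {N : ModuleCat.{0} R} (Q : Type) [AddCommGroup Q]
    [Module R Q] [Module.Projective R Q] (h : ResLen R (fun P => Module.Projective R P) n N) :
    ResLen R (fun P => Module.Projective R P) n (ModuleCat.of R (N × Q)) := by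
  cases n with
  | zero =>
    have : Module.Projective R N := h
    exact inferInstanceAs (Module.Projective R (N × Q))
  | succ n =>
    obtain ⟨G, g, hG, hg, hres⟩ := h
    have : Module.Projective R G := hG
    have hker : (LinearMap.ker g).map (LinearMap.inl R G Q) =
        LinearMap.ker (g.prodMap (LinearMap.id : Q →ₗ[R] Q)) := by
      ext ⟨x, y⟩
      simp [eq_comm]
    refine ⟨ModuleCat.of R (G × Q), g.prodMap LinearMap.id,
      inferInstanceAs (Module.Projective R (G × Q)), hg.prodMap Function.surjective_id, ?_⟩
    exact hres.projective_of_linearEquiv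
      ((Submodule.equivMapOfInjective _ LinearMap.inl_injective _).trans (.ofEq _ _ hker))

theorem Module.Projective.of_exact_of_resLen :
    ∀ (n : ℕ) {M P : Type} [AddCommGroup M] [Module R M] [AddCommGroup P] [Module R P]
      [Module.Projective R P] {i : M →ₗ[R] P} {p : P →ₗ[R] M},
      Function.Injective i → Function.Surjective p → Function.Exact i p →
      ResLen R (fun P => Module.Projective R P) n (ModuleCat.of R M) → Module.Projective R M
  | 0, _, _, _, _, _, _, _, _, _, _, _, _, h => h
  | n + 1, M, P, _, _, _, _, _, i, p, hi, hp, hip, ⟨G, g, hG, hg, hres⟩ => by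
    have : Module.Projective R G := hG
    obtain ⟨e⟩ := schanuel hi hp hip (LinearMap.ker g).injective_subtype hg
      (LinearMap.exact_subtype_ker_map g)
    have hresMG : ResLen R (fun P => Module.Projective R P) n (ModuleCat.of R (M × G)) :=
      (hres.projective_prod P).projective_of_linearEquiv e.symm
    have : Module.Projective R (M × G) :=
      of_exact_of_resLen n (i := i.prodMap (LinearMap.inl R G G))
        (p := p.prodMap (LinearMap.snd R G G)) (hi.prodMap LinearMap.inl_injective)
        (hp.prodMap Prod.snd_surjective) (hip.prodMap Function.Exact.inl_snd) hresMG
    exact .of_split (LinearMap.inl R M G) (LinearMap.fst R M G) rfl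

end

/-- if `M` fits into a short exact sequence `0 → M → P → M → 0` with `P`
projective and `M` has finite projective dimension, then `M` is projective. -/
theorem stmt15 (R : Type) [CommRing R] (M : Type) [AddCommGroup M] [Module R M]
    (P : Type) [AddCommGroup P] [Module R P] (hP : Module.Projective R P)
    (i : M →ₗ[R] P) (p : P →ₗ[R] M)
    (hi : Function.Injective i) (hp : Function.Surjective p)
    (hexact : LinearMap.range i = LinearMap.ker p)
    (hfin : pdim R M < ⊤) : Module.Projective R M := by
  obtain ⟨_, ⟨n, rfl, hres⟩, -⟩ := sInf_lt_iff.mp hfin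
  exact .of_exact_of_resLen n hi hp (LinearMap.exact_iff.mpr hexact.symm) hres
end
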